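/- Let f ∈ L¹[-π,π] with ∫_{-π}^{π} f dx = 0, extended 2π-periodically, and let K(x) = (1/2)x² − π|x| + (1/3)π² (also extended 2π-periodically). Define u = K * f, i.e. u(x) = (1/(2π))∫_{-π}^{π} K(x−y)f(y) dy. Then u is continuously differentiable with u' = K' * f, u' is absolutely continuous on [-π,π] with −u'' = f a.e., u'(−π) = u'(π) = −(1/(2π))∫_{-π}^{π} x f(x) dx, and ∫_{-π}^{π} u dx = 0. -/

import Mathlib

/-! On `(0, 2π)` the kernel is `K x = (x - π)² / 2 - π² / 6` with `K' x = x - π`, so `Kper` is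
a continuous, `π`-Lipschitz primitive of `Kper'` away from `2πℤ`, and differentiating under the
integral sign gives `u' = K' * f`. For `x, y ∈ [-π, π]` one has
`K' (x - y) = (x - y) - π sgn (x - y)` almost everywhere, so the mean-zero condition turns
`(K' * f) x` into `-(1/2π) ∫ y f y - ∫_{-π}^x f`: this gives the boundary values, `-u'' = f`,
and, by periodicity, continuity of `u'` on all of `ℝ`. Finally `∫ u = 0` by Fubini, since `K`
has mean zero over a period.
-/

open Real MeasureTheory Set

noncomputable section

/-- The `2π`-periodic extension of the Neumann kernel `K(x) = (1/2)x² - π|x| + π²/3`. -/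
def Kper (z : ℝ) : ℝ :=
  (1/2) * (toIocMod Real.two_pi_pos (-π) z)^2
    - π * |toIocMod Real.two_pi_pos (-π) z| + π^2 / 3

/-- The `2π`-periodic extension of `K'`, where `K'(x) = x - π·sgn x` on `(-π,π)`. -/
def Kper' (z : ℝ) : ℝ :=
  toIocMod Real.two_pi_pos (-π) z - π * Real.sign (toIocMod Real.two_pi_pos (-π) z)

open Filter Topology

theorem Function.Periodic.continuous_of_continuousOn_Icc {B : Type*} [TopologicalSpace B]
    {f : ℝ → B} {p a : ℝ} (hf : Function.Periodic f p) (hp : 0 < p)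
    (hc : ContinuousOn f (Icc a (a + p))) : Continuous f := by
  have : Fact (0 < p) := ⟨hp⟩
  have hlift : f = AddCircle.liftIco p a f ∘ (↑) := by
    funext x
    rw [Function.comp_apply, ← toIcoMod_add_toIcoDiv_zsmul hp a x, hf.zsmul _ _,
      AddCircle.coe_add, AddCircle.coe_zsmul, AddCircle.coe_period, smul_zero, add_zero,
      AddCircle.liftIco_coe_apply (toIcoMod_mem_Ico hp a x)]
  rw [hlift]
  exact (AddCircle.liftIco_continuous (hf a).symm hc).comp (AddCircle.continuous_mk' p)

theorem measurable_toIocMod {p : ℝ} (hp : 0 < p) (a : ℝ) : Measurable (toIocMod hp a) := by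
  have h : toIocMod hp a = fun x => x + (⌊(a + p - x) / p⌋ : ℝ) * p := by
    funext x
    rw [toIocMod, toIocDiv_eq_neg_floor, neg_zsmul, zsmul_eq_mul, sub_neg_eq_add]
  rw [h]
  fun_prop

theorem Real.measurable_sign : Measurable Real.sign :=
  Measurable.ite measurableSet_Iio measurable_const
    (Measurable.ite measurableSet_Ioi measurable_const measurable_const)

lemma Real.abs_sign_le_one (r : ℝ) : |Real.sign r| ≤ 1 := by
  rcases Real.sign_apply_eq r with h | h | h <;> norm_num [h]

lemma toIocMod_neg_pi_eq_self {r : ℝ} (hr : r ∈ Ioc (-π) π) :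
    toIocMod two_pi_pos (-π) r = r :=
  (toIocMod_eq_self _).2 (by rwa [show -π + 2 * π = π by ring])

lemma toIocMod_neg_pi_mem (z : ℝ) : toIocMod two_pi_pos (-π) z ∈ Ioc (-π) π := by
  simpa [show -π + 2 * π = π by ring] using toIocMod_mem_Ioc two_pi_pos (-π) z

lemma Kper_periodic : Function.Periodic Kper (2 * π) := fun z => by
  rw [Kper, Kper, toIocMod_add_right]

lemma Kper'_periodic : Function.Periodic Kper' (2 * π) := fun z => by
  rw [Kper', Kper', toIocMod_add_right]

lemma Kper_eq_of_mem_Icc {x : ℝ} (hx : x ∈ Icc 0 (2 * π)) :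
    Kper x = (x - π) ^ 2 / 2 - π ^ 2 / 6 := by
  rcases le_or_gt x π with h | h
  · rw [Kper, toIocMod_neg_pi_eq_self ⟨by linarith [pi_pos, hx.1], h⟩, abs_of_nonneg hx.1]
    ring
  · rw [← Kper_periodic.sub_eq, Kper,
      toIocMod_neg_pi_eq_self ⟨by linarith, by linarith [hx.2]⟩,
      abs_of_nonpos (by linarith [hx.2])]
    ring

lemma Kper'_eq_of_mem_Ioo {x : ℝ} (hx : x ∈ Ioo 0 (2 * π)) : Kper' x = x - π := by
  rcases le_or_gt x π with h | h
  · rw [Kper', toIocMod_neg_pi_eq_self ⟨by linarith [pi_pos, hx.1], h⟩, Real.sign_of_pos hx.1]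
    ring
  · rw [← Kper'_periodic.sub_eq, Kper',
      toIocMod_neg_pi_eq_self ⟨by linarith, by linarith [hx.2]⟩,
      Real.sign_of_neg (by linarith [hx.2])]
    ring

lemma continuous_Kper : Continuous Kper := by
  refine Kper_periodic.continuous_of_continuousOn_Icc two_pi_pos (a := 0) ?_
  rw [zero_add]
  exact ContinuousOn.congr (by fun_prop) fun x hx => Kper_eq_of_mem_Icc hx

lemma measurable_Kper' : Measurable Kper' := by
  have := measurable_toIocMod two_pi_pos (-π)
  exact this.sub ((Real.measurable_sign.comp this).const_mul π)

lemma abs_Kper_le (z : ℝ) : |Kper z| ≤ π ^ 2 := by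
  obtain ⟨h1, h2⟩ := toIocMod_neg_pi_mem z
  have ha : |toIocMod two_pi_pos (-π) z| ≤ π := abs_le.2 ⟨h1.le, h2⟩
  rw [Kper, ← sq_abs (toIocMod _ _ _), abs_le]
  constructor <;> nlinarith [abs_nonneg (toIocMod two_pi_pos (-π) z), pi_pos]

lemma abs_Kper'_le (z : ℝ) : |Kper' z| ≤ π := by
  obtain ⟨h1, h2⟩ := toIocMod_neg_pi_mem z
  rw [Kper', abs_le]
  rcases lt_trichotomy (toIocMod two_pi_pos (-π) z) 0 with h | h | h
  · rw [Real.sign_of_neg h]; constructor <;> linarith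
  · rw [h, Real.sign_zero]; constructor <;> linarith [pi_pos]
  · rw [Real.sign_of_pos h]; constructor <;> linarith

lemma hasDerivAt_Kper_of_mem_Ioo {x : ℝ} (hx : x ∈ Ioo 0 (2 * π)) :
    HasDerivAt Kper (Kper' x) x := by
  have hK : Kper =ᶠ[𝓝 x] fun z => (z - π) ^ 2 / 2 - π ^ 2 / 6 :=
    eventually_of_mem (Ioo_mem_nhds hx.1 hx.2) fun z hz => Kper_eq_of_mem_Icc ⟨hz.1.le, hz.2.le⟩
  rw [Kper'_eq_of_mem_Ioo hx]
  refine HasDerivAt.congr_of_eventuallyEq ?_ hK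
  refine ((((hasDerivAt_id' x).sub_const π).fun_pow 2).div_const 2).sub_const (π ^ 2 / 6)
    |>.congr_deriv ?_
  push_cast; ring

lemma hasDerivAt_Kper {t : ℝ} (ht : t ∉ range fun n : ℤ => n * (2 * π)) :
    HasDerivAt Kper (Kper' t) t := by
  set r := toIcoMod two_pi_pos 0 t
  set n := toIcoDiv two_pi_pos 0 t
  have htr : r = t - n * (2 * π) := by rw [← zsmul_eq_mul]; rfl
  obtain ⟨h0, h2π⟩ := toIcoMod_mem_Ico two_pi_pos 0 t
  have hr0 : r ≠ 0 := fun h => ht ⟨n, by linarith⟩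
  have hd : HasDerivAt (fun x => Kper (x - n * (2 * π))) (Kper' r) t := by
    apply HasDerivAt.comp_sub_const
    rw [← htr]
    exact hasDerivAt_Kper_of_mem_Ioo ⟨lt_of_le_of_ne h0 hr0.symm, by simpa using h2π⟩
  rwa [htr, Kper'_periodic.sub_int_mul_eq,
    funext fun x => Kper_periodic.sub_int_mul_eq (x := x) n] at hd

lemma intervalIntegrable_Kper' (a b : ℝ) : IntervalIntegrable Kper' volume a b :=
  (intervalIntegrable_const (c := π)).mono_fun' measurable_Kper'.aestronglyMeasurable
    (ae_of_all _ fun z => (Real.norm_eq_abs _).trans_le (abs_Kper'_le z))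

lemma integral_Kper' (a b : ℝ) : ∫ t in a..b, Kper' t = Kper b - Kper a :=
  integral_eq_of_hasDerivAt_off_countable Kper Kper' (countable_range _)
    continuous_Kper.continuousOn (fun _ ht => hasDerivAt_Kper ht.2)
    (intervalIntegrable_Kper' a b)

lemma abs_Kper_sub_le (a b : ℝ) : |Kper a - Kper b| ≤ π * |a - b| := by
  rw [← integral_Kper', ← Real.norm_eq_abs]
  exact intervalIntegral.norm_integral_le_of_norm_le_const fun z _ =>
    (Real.norm_eq_abs _).trans_le (abs_Kper'_le z)

lemma integral_Kper : ∫ x in 0..2 * π, Kper x = 0 := by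
  have hH : ∀ x ∈ uIcc 0 (2 * π), HasDerivAt (fun x => (x - π) ^ 3 / 6 - π ^ 2 / 6 * x)
      ((x - π) ^ 2 / 2 - π ^ 2 / 6) x := fun x _ => by
    refine ((((hasDerivAt_id' x).sub_const π).fun_pow 3).div_const 6).fun_sub
      ((hasDerivAt_id' x).const_mul (π ^ 2 / 6)) |>.congr_deriv ?_
    push_cast; ring
  rw [intervalIntegral.integral_congr fun x hx =>
      Kper_eq_of_mem_Icc (uIcc_of_le two_pi_pos.le ▸ hx),
    intervalIntegral.integral_eq_sub_of_hasDerivAt hH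
      (Continuous.intervalIntegrable (by fun_prop) _ _)]
  ring

lemma Kper'_eq_sub_sign {d : ℝ} (h1 : -(2 * π) < d) (h2 : d < 2 * π) (h0 : d ≠ 0) :
    Kper' d = d - π * Real.sign d := by
  rcases h0.lt_or_gt with hd | hd
  · rw [← Kper'_periodic, Kper'_eq_of_mem_Ioo ⟨by linarith, by linarith⟩,
      Real.sign_of_neg hd]
    ring
  · rw [Kper'_eq_of_mem_Ioo ⟨hd, h2⟩, Real.sign_of_pos hd]
    ring

section Convolution

variable {f : ℝ → ℝ} {a b : ℝ}

lemma intervalIntegrable_comp_sub_mul {g : ℝ → ℝ} {C : ℝ} (hg : Measurable g)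
    (hC : ∀ z, |g z| ≤ C) (hf : IntervalIntegrable f volume a b) (x : ℝ) :
    IntervalIntegrable (fun y => g (x - y) * f y) volume a b := by
  rw [intervalIntegrable_iff] at hf ⊢
  exact hf.bdd_mul (hg.comp (measurable_const.sub measurable_id)).aestronglyMeasurable
    (ae_of_all _ fun y => (Real.norm_eq_abs _).trans_le (hC _))

lemma hasDerivAt_integral_Kper_sub_mul (hf : IntervalIntegrable f volume a b) (x₀ : ℝ) :
    HasDerivAt (fun x => ∫ y in a..b, Kper (x - y) * f y)
      (∫ y in a..b, Kper' (x₀ - y) * f y) x₀ := by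
  have hsmooth : ∀ᵐ y, x₀ - y ∉ range fun n : ℤ => n * (2 * π) := by
    filter_upwards [(countable_range fun n : ℤ => x₀ - n * (2 * π)).ae_notMem volume]
      with y hy ⟨n, hn⟩
    exact hy ⟨n, by linarith⟩
  refine (intervalIntegral.hasDerivAt_integral_of_dominated_loc_of_lip (s := univ)
    (bound := fun y => π * f y) univ_mem
    (Eventually.of_forall fun x =>
      (intervalIntegrable_comp_sub_mul continuous_Kper.measurable abs_Kper_le hf x).def'.1)
    (intervalIntegrable_comp_sub_mul continuous_Kper.measurable abs_Kper_le hf x₀)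
    (intervalIntegrable_comp_sub_mul measurable_Kper' abs_Kper'_le hf x₀).def'.1
    (ae_of_all _ fun y _ => LipschitzOnWith.of_dist_le_mul fun x₁ _ x₂ _ => ?_)
    (hf.const_mul π) ?_).2
  · rw [Real.dist_eq, Real.dist_eq, Real.coe_nnabs, ← sub_mul, abs_mul, abs_mul,
      abs_of_pos pi_pos, mul_assoc, mul_comm |f y|, ← mul_assoc]
    gcongr
    simpa using abs_Kper_sub_le (x₁ - y) (x₂ - y)
  · filter_upwards [hsmooth] with y hy _
    exact (HasDerivAt.comp_sub_const x₀ y (hasDerivAt_Kper hy)).mul_const (f y)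

lemma integral_sign_sub_mul (hf : IntervalIntegrable f volume a b) {x : ℝ} (hx : x ∈ Icc a b) :
    ∫ y in a..b, Real.sign (x - y) * f y = (∫ y in a..x, f y) - ∫ y in x..b, f y := by
  have hsign := intervalIntegrable_comp_sub_mul Real.measurable_sign Real.abs_sign_le_one hf x
  have hx' : x ∈ uIcc a b := Icc_subset_uIcc hx
  rw [← intervalIntegral.integral_add_adjacent_intervals
    (hsign.mono_set (uIcc_subset_uIcc_left hx')) (hsign.mono_set (uIcc_subset_uIcc_right hx')),
    sub_eq_add_neg, ← intervalIntegral.integral_neg]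
  congr 1
  · refine intervalIntegral.integral_congr_ae ?_
    filter_upwards [(countable_singleton x).ae_notMem volume] with y hyx hy
    rw [uIoc_of_le hx.1] at hy
    rw [Real.sign_of_pos (sub_pos.2 (lt_of_le_of_ne hy.2 hyx)), one_mul]
  · refine intervalIntegral.integral_congr_ae (ae_of_all _ fun y hy => ?_)
    rw [uIoc_of_le hx.2] at hy
    rw [Real.sign_of_neg (sub_neg.2 hy.1), neg_one_mul]

lemma integral_Kper'_sub_mul (hf : IntervalIntegrable f volume (-π) π)
    (hmean : ∫ y in (-π)..π, f y = 0) {x : ℝ} (hx : x ∈ Icc (-π) π) :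
    ∫ y in (-π)..π, Kper' (x - y) * f y
      = -(∫ y in (-π)..π, y * f y) - 2 * π * ∫ y in (-π)..x, f y := by
  have hK : ∀ᵐ y, y ∈ uIoc (-π) π →
      Kper' (x - y) * f y = x * f y - y * f y - π * (Real.sign (x - y) * f y) := by
    filter_upwards [(countable_singleton x).ae_notMem volume,
      (countable_singleton π).ae_notMem volume] with y hyx hyπ hy
    rw [uIoc_of_le (by linarith [pi_pos])] at hy
    rw [mem_singleton_iff] at hyx hyπ
    rw [Kper'_eq_sub_sign (by linarith [hx.1, lt_of_le_of_ne hy.2 hyπ]) (by linarith [hx.2, hy.1])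
      (sub_ne_zero.2 (Ne.symm hyx))]
    ring
  have hsign := intervalIntegrable_comp_sub_mul Real.measurable_sign Real.abs_sign_le_one hf x
  have hright : ∫ y in x..π, f y = -∫ y in (-π)..x, f y := by
    rw [← intervalIntegral.integral_interval_sub_left hf
      (hf.mono_set (uIcc_subset_uIcc_left (Icc_subset_uIcc hx))), hmean, zero_sub]
  rw [intervalIntegral.integral_congr_ae hK, intervalIntegral.integral_sub,
    intervalIntegral.integral_sub, intervalIntegral.integral_const_mul,
    intervalIntegral.integral_const_mul, hmean,
    integral_sign_sub_mul hf hx, hright]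
  · ring
  · exact hf.const_mul x
  · exact hf.continuousOn_mul continuousOn_id
  · exact (hf.const_mul x).sub (hf.continuousOn_mul continuousOn_id)
  · exact hsign.const_mul π

lemma continuous_integral_Kper'_sub_mul (hf : IntervalIntegrable f volume (-π) π)
    (hmean : ∫ y in (-π)..π, f y = 0) :
    Continuous fun x => ∫ y in (-π)..π, Kper' (x - y) * f y := by
  refine Function.Periodic.continuous_of_continuousOn_Icc (fun x => ?_) two_pi_pos (a := -π) ?_
  · simp only [add_sub_right_comm, Kper'_periodic _]
  · rw [show -π + 2 * π = π by ring]
    refine ContinuousOn.congr ?_ fun x hx => integral_Kper'_sub_mul hf hmean hx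
    have hprim := intervalIntegral.continuousOn_primitive_interval' hf left_mem_uIcc
    rw [uIcc_of_le (by linarith [pi_pos])] at hprim
    exact continuousOn_const.sub (continuousOn_const.mul hprim)

lemma integrableOn_uncurry_comp_sub_mul {g : ℝ → ℝ} {C : ℝ} (hg : Measurable g)
    (hC : ∀ z, |g z| ≤ C) {s t : Set ℝ} (hs : volume s ≠ ⊤) (hf : IntegrableOn f t) :
    IntegrableOn (Function.uncurry fun x y => g (x - y) * f y) (s ×ˢ t) := by
  rw [IntegrableOn, Measure.volume_eq_prod, ← Measure.prod_restrict]
  have hconst : Integrable (fun _ : ℝ => C) (volume.restrict s) := integrableOn_const hs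
  refine (hconst.mul_prod hf.norm).mono'
    ((hg.comp (measurable_fst.sub measurable_snd)).aestronglyMeasurable.mul
      hf.aestronglyMeasurable.comp_snd) (ae_of_all _ fun p => ?_)
  rw [Function.uncurry_apply_pair, norm_mul, Real.norm_eq_abs]
  exact mul_le_mul_of_nonneg_right (hC _) (norm_nonneg _)

lemma integral_Kper_sub (y : ℝ) : ∫ x in (-π)..π, Kper (x - y) = 0 := by
  rw [intervalIntegral.integral_comp_sub_right, show π - y = -π - y + 2 * π by ring,
    Kper_periodic.intervalIntegral_add_eq (-π - y) 0, zero_add, integral_Kper]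

lemma integral_integral_Kper_sub_mul (hf : IntervalIntegrable f volume a b) :
    ∫ x in (-π)..π, ∫ y in a..b, Kper (x - y) * f y = 0 := by
  rw [intervalIntegral_intervalIntegral_swap (integrableOn_uncurry_comp_sub_mul
    continuous_Kper.measurable abs_Kper_le measure_Ioc_lt_top.ne hf.def')]
  simp only [intervalIntegral.integral_mul_const, integral_Kper_sub, zero_mul,
    intervalIntegral.integral_zero]

end Convolution

theorem neumann_convolution_properties_general (f : ℝ → ℝ)
    (hf : IntegrableOn f (Icc (-π) π))
    (hmean : (∫ x in (-π)..π, f x) = 0) :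
    (∀ x : ℝ,
      HasDerivAt (fun x : ℝ => (1 / (2 * π)) * ∫ y in (-π)..π, Kper (x - y) * f y)
        ((1 / (2 * π)) * ∫ y in (-π)..π, Kper' (x - y) * f y) x) ∧
    Continuous (fun x : ℝ => (1 / (2 * π)) * ∫ y in (-π)..π, Kper' (x - y) * f y) ∧
    (∀ x ∈ Icc (-π) π,
      ((1 / (2 * π)) * ∫ y in (-π)..π, Kper' (x - y) * f y) -
        ((1 / (2 * π)) * ∫ y in (-π)..π, Kper' ((-π) - y) * f y) =
          -∫ t in (-π)..x, f t) ∧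
    ((1 / (2 * π)) * ∫ y in (-π)..π, Kper' ((-π) - y) * f y) =
        -(1 / (2 * π)) * ∫ x in (-π)..π, x * f x ∧
    ((1 / (2 * π)) * ∫ y in (-π)..π, Kper' (π - y) * f y) =
        -(1 / (2 * π)) * ∫ x in (-π)..π, x * f x ∧
    (∫ x in (-π)..π, (1 / (2 * π)) * ∫ y in (-π)..π, Kper (x - y) * f y) = 0 := by
  have hππ : -π ≤ π := by linarith [pi_pos]
  have hfi : IntervalIntegrable f volume (-π) π :=
    (intervalIntegrable_iff_integrableOn_Icc_of_le hππ).2 hf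
  have hV := fun x (hx : x ∈ Icc (-π) π) => integral_Kper'_sub_mul hfi hmean hx
  refine ⟨fun x => (hasDerivAt_integral_Kper_sub_mul hfi x).const_mul _,
    (continuous_integral_Kper'_sub_mul hfi hmean).const_mul _, fun x hx => ?_, ?_, ?_, ?_⟩
  · rw [hV x hx, hV _ (left_mem_Icc.2 hππ), intervalIntegral.integral_same]
    field_simp
    ring
  · rw [hV _ (left_mem_Icc.2 hππ), intervalIntegral.integral_same]
    ring
  · rw [hV _ (right_mem_Icc.2 hππ), hmean]
    ring
  · rw [intervalIntegral.integral_const_mul, integral_integral_Kper_sub_mul hfi, mul_zero]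

theorem neumann_convolution_properties (f : ℝ → ℝ)
    (hper : Function.Periodic f (2 * π)) (hf : IntegrableOn f (Icc (-π) π))
    (hmean : (∫ x in (-π)..π, f x) = 0) :
    (∀ x : ℝ,
      HasDerivAt (fun x : ℝ => (1 / (2 * π)) * ∫ y in (-π)..π, Kper (x - y) * f y)
        ((1 / (2 * π)) * ∫ y in (-π)..π, Kper' (x - y) * f y) x) ∧
    Continuous (fun x : ℝ => (1 / (2 * π)) * ∫ y in (-π)..π, Kper' (x - y) * f y) ∧
    (∀ x ∈ Icc (-π) π,
      ((1 / (2 * π)) * ∫ y in (-π)..π, Kper' (x - y) * f y) -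
        ((1 / (2 * π)) * ∫ y in (-π)..π, Kper' ((-π) - y) * f y) =
          -∫ t in (-π)..x, f t) ∧
    ((1 / (2 * π)) * ∫ y in (-π)..π, Kper' ((-π) - y) * f y) =
        -(1 / (2 * π)) * ∫ x in (-π)..π, x * f x ∧
    ((1 / (2 * π)) * ∫ y in (-π)..π, Kper' (π - y) * f y) =
        -(1 / (2 * π)) * ∫ x in (-π)..π, x * f x ∧
    (∫ x in (-π)..π, (1 / (2 * π)) * ∫ y in (-π)..π, Kper (x - y) * f y) = 0 :=
  neumann_convolution_properties_general f hf hmean
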